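/- arXiv:math/0208228 — 5 statements merged into one kernel-verified Lean document; each statement's English description precedes it below -/
import Mathlib

section
/- Let n ≥ 1 and let a₁,…,aₙ : ℝ → ℝ be continuous functions such that for every t ∈ ℝ the monic polynomial P(t)(x) = xⁿ - a₁(t)xⁿ⁻¹ + a₂(t)xⁿ⁻² - ⋯ + (-1)ⁿaₙ(t) has all roots real. Then there exists a continuous map x = (x₁,…,xₙ) : ℝ → ℝⁿ which is a parametrization of the roots of P, i.e. for each t ∈ ℝ the multiset {x₁(t),…,xₙ(t)} equals the multiset of roots of P(t) counted with multiplicity. -/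
/-!
Order the roots of `P(t)` increasingly. The map sending a nondecreasing tuple `x ∈ ℝⁿ` to its
elementary symmetric functions `(e₁(x), …, eₙ(x))` is continuous and injective (a monic
polynomial determines its roots, and a multiset has only one nondecreasing enumeration), and it
is proper, since by Cauchy's bound the roots of a monic polynomial are bounded in terms of its
coefficients. Hence it is a closed embedding, and the ordered roots, whose image is the continuous
curve `(a₁(t), …, aₙ(t))`, depend continuously on `t`.
-/

open Polynomial

/-- The monic polynomial curve `P(t)(x) = xⁿ - a₁(t)xⁿ⁻¹ + a₂(t)xⁿ⁻² - ⋯ + (-1)ⁿ aₙ(t)`. -/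
noncomputable def curvePoly (n : ℕ) (a : ℕ → ℝ → ℝ) (t : ℝ) : Polynomial ℝ :=
  X ^ n + ∑ k ∈ Finset.Icc 1 n, C ((-1 : ℝ) ^ k * a k t) * X ^ (n - k)

/-- `x : T → ℝⁿ` parametrizes the roots of `P` on `T`: for each `t ∈ T` the multiset
`{x₁(t),…,xₙ(t)}` equals the multiset of roots of `P(t)` with multiplicity. -/
def IsRootParamOn (n : ℕ) (a : ℕ → ℝ → ℝ) (T : Set ℝ) (x : Fin n → ℝ → ℝ) : Prop :=
  ∀ t ∈ T, (curvePoly n a t).roots = Multiset.map (fun i => x i t) (Finset.univ : Finset (Fin n)).val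

open Finset Topology

theorem Multiset.eq_of_esymm_eq {R : Type*} [CommRing R] [IsDomain R] {s t : Multiset R}
    (hcard : card s = card t) (h : ∀ k ∈ Finset.Icc 1 (card s), s.esymm k = t.esymm k) :
    s = t := by
  have hprod : (s.map fun r => X - C r).prod = (t.map fun r => X - C r).prod := by
    rw [prod_X_sub_X_eq_sum_esymm, prod_X_sub_X_eq_sum_esymm, ← hcard]
    refine sum_congr rfl fun k hk => ?_
    rcases Nat.eq_zero_or_pos k with rfl | hk0
    · simp [Multiset.esymm]
    · rw [h k (mem_Icc.mpr ⟨hk0, Nat.lt_succ_iff.mp (mem_range.mp hk)⟩)]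
  simpa using congrArg roots hprod

theorem Multiset.exists_monotone_univ_map_eq {α : Type*} [LinearOrder α] (s : Multiset α)
    {n : ℕ} (hs : card s = n) : ∃ x : Fin n → α, Monotone x ∧ univ.val.map x = s := by
  obtain ⟨l, hl, rfl⟩ : ∃ l : List α, l.SortedLE ∧ (l : Multiset α) = s :=
    ⟨s.sort (· ≤ ·), (pairwise_sort _ _).sortedLE, sort_eq _ _⟩
  obtain rfl : l.length = n := hs
  exact ⟨l.get, hl.monotone_get, by rw [Fin.univ_val_map, List.ofFn_get]⟩

theorem Fin.eq_of_monotone_of_univ_map_eq {α : Type*} [LinearOrder α] {n : ℕ}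
    {x y : Fin n → α} (hx : Monotone x) (hy : Monotone y)
    (h : univ.val.map x = univ.val.map y) : x = y := by
  rw [Fin.univ_val_map, Fin.univ_val_map, Multiset.coe_eq_coe] at h
  exact List.ofFn_injective (h.eq_of_sortedLE hx.sortedLE_ofFn hy.sortedLE_ofFn)

noncomputable def esymmTuple (R : Type*) [CommRing R] (n : ℕ) (x : Fin n → R) : Fin n → R :=
  fun k => (univ.val.map x).esymm (k + 1)

section esymmTuple

variable {R : Type*} [CommRing R] {n : ℕ}

theorem continuous_esymmTuple [TopologicalSpace R] [IsTopologicalRing R] :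
    Continuous (esymmTuple R n) := by
  refine continuous_pi fun k => ?_
  simp only [esymmTuple, Finset.esymm_map_val]
  fun_prop

theorem esymmTuple_injOn_monotone [IsDomain R] [LinearOrder R] :
    Set.InjOn (esymmTuple R n) {x | Monotone x} := by
  intro x hx y hy hxy
  refine Fin.eq_of_monotone_of_univ_map_eq hx hy (Multiset.eq_of_esymm_eq (by simp) ?_)
  intro k hk
  simp only [Multiset.card_map, card_val, card_univ, Fintype.card_fin, mem_Icc] at hk
  obtain ⟨j, rfl⟩ : ∃ j : Fin n, (j : ℕ) + 1 = k := ⟨⟨k - 1, by omega⟩, Nat.sub_add_cancel hk.1⟩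
  exact congrFun hxy j

end esymmTuple

theorem abs_lt_of_abs_esymmTuple_le {n : ℕ} {x : Fin n → ℝ} {B : ℝ}
    (hB : ∀ k, |esymmTuple ℝ n x k| ≤ B) (i : Fin n) : |x i| < B + 1 := by
  set s := univ.val.map x
  set p := (s.map fun r => X - C r).prod
  have hs : Multiset.card s = n := by simp [s]
  have hp : p.Monic := monic_multiset_prod_of_monic _ _ fun r _ => monic_X_sub_C r
  have hroot : p.IsRoot (x i) := isRoot_of_mem_roots (by
    rw [roots_multiset_prod_X_sub_C]; exact Multiset.mem_map_of_mem _ (mem_univ i))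
  have hcoeff : ∀ k ∈ range n, ‖p.coeff k‖₊ ≤ B.toNNReal := by
    intro k hk
    rw [mem_range] at hk
    have hesymm := hB ⟨n - k - 1, by omega⟩
    rw [esymmTuple, show n - k - 1 + 1 = n - k by omega] at hesymm
    rw [Multiset.prod_X_sub_C_coeff s (by omega), hs, ← NNReal.coe_le_coe, coe_nnnorm,
      Real.coe_toNNReal', norm_mul, norm_pow, norm_neg, norm_one, one_pow, one_mul]
    exact hesymm.trans (le_max_left _ _)
  have hcauchy := hroot.norm_lt_cauchyBound hp.ne_zero
  rw [cauchyBound, hp.leadingCoeff, natDegree_multiset_prod_X_sub_C_eq_card, hs, nnnorm_one,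
    div_one] at hcauchy
  have hB0 : 0 ≤ B := (abs_nonneg _).trans (hB ⟨0, i.pos⟩)
  have hlt := hcauchy.trans_le (add_le_add_left (Finset.sup_le hcoeff) 1)
  rw [← NNReal.coe_lt_coe, coe_nnnorm] at hlt
  simpa [hB0] using hlt

theorem isProperMap_domRestrict_monotone_esymmTuple (n : ℕ) :
    IsProperMap ({x : Fin n → ℝ | Monotone x}.domRestrict (esymmTuple ℝ n)) := by
  refine isProperMap_iff_isCompact_preimage.mpr
    ⟨continuous_esymmTuple.comp continuous_subtype_val, fun K hK => ?_⟩
  obtain ⟨B, hB⟩ := hK.isBounded.exists_norm_le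
  rw [Subtype.isCompact_iff, Set.domRestrict_eq, Set.preimage_comp, Subtype.image_preimage_coe]
  refine Metric.isCompact_of_isClosed_isBounded
    (isClosed_monotone.inter (hK.isClosed.preimage continuous_esymmTuple)) ?_
  refine (Metric.isBounded_closedBall (x := 0) (r := B + 1)).subset fun x ⟨_, hx⟩ => ?_
  have hB0 : 0 ≤ B + 1 := by linarith [(norm_nonneg _).trans (hB _ hx)]
  rw [mem_closedBall_zero_iff, pi_norm_le_iff_of_nonneg hB0]
  exact fun i =>
    (abs_lt_of_abs_esymmTuple_le (fun k => (norm_le_pi_norm _ k).trans (hB _ hx)) i).le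

theorem isClosedEmbedding_domRestrict_monotone_esymmTuple (n : ℕ) :
    IsClosedEmbedding ({x : Fin n → ℝ | Monotone x}.domRestrict (esymmTuple ℝ n)) :=
  let h := isProperMap_domRestrict_monotone_esymmTuple n
  .of_continuous_injective_isClosedMap h.continuous
    (Set.injOn_iff_injective.mp esymmTuple_injOn_monotone) h.isClosedMap

section curvePoly

variable {n : ℕ} (a : ℕ → ℝ → ℝ) (t : ℝ)

theorem degree_curvePoly_sub_X_pow_lt :
    (curvePoly n a t - X ^ n).degree < (n : WithBot ℕ) := by
  rw [curvePoly, add_sub_cancel_left]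
  refine (degree_sum_le _ _).trans_lt ((Finset.sup_lt_iff (WithBot.bot_lt_coe n)).mpr ?_)
  intro k hk
  rw [mem_Icc] at hk
  exact (degree_C_mul_X_pow_le _ _).trans_lt (Nat.cast_lt.mpr (by omega))

theorem monic_curvePoly : (curvePoly n a t).Monic := by
  simpa using monic_X_pow_add (degree_curvePoly_sub_X_pow_lt a t)

theorem natDegree_curvePoly : (curvePoly n a t).natDegree = n := by
  rw [← add_sub_cancel (X ^ n) (curvePoly n a t), natDegree_add_eq_left_of_degree_lt
    (by rw [degree_X_pow]; exact degree_curvePoly_sub_X_pow_lt a t), natDegree_X_pow]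

theorem coeff_curvePoly {k : ℕ} (hk : k < n) :
    (curvePoly n a t).coeff k = (-1) ^ (n - k) * a (n - k) t := by
  rw [curvePoly, coeff_add, coeff_X_pow, if_neg hk.ne, zero_add, finsetSum_coeff,
    sum_eq_single (n - k)]
  · rw [coeff_C_mul, coeff_X_pow, if_pos (by omega), mul_one]
  · intro j hj hne
    rw [mem_Icc] at hj
    rw [coeff_C_mul, coeff_X_pow, if_neg (by omega), mul_zero]
  · intro h
    exact absurd (mem_Icc.mpr ⟨by omega, by omega⟩) h

theorem esymm_roots_curvePoly {a t} (hroots : Multiset.card (curvePoly n a t).roots = n) {k : ℕ}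
    (hk : k ∈ Icc 1 n) : (curvePoly n a t).roots.esymm k = a k t := by
  rw [mem_Icc] at hk
  have hvieta := coeff_eq_esymm_roots_of_card (hroots.trans (natDegree_curvePoly a t).symm)
    (k := n - k) (by rw [natDegree_curvePoly]; omega)
  rw [coeff_curvePoly a t (by omega), (monic_curvePoly a t).leadingCoeff, natDegree_curvePoly,
    show n - (n - k) = k by omega, one_mul] at hvieta
  exact (mul_left_cancel₀ (pow_ne_zero _ (neg_ne_zero.mpr one_ne_zero)) hvieta).symm

end curvePoly

theorem continuous_root_parametrization_general
    (n : ℕ) (a : ℕ → ℝ → ℝ)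
    (hcont : ∀ k ∈ Finset.Icc 1 n, Continuous (a k))
    (hreal : ∀ t : ℝ, ((curvePoly n a t).roots).card = n) :
    ∃ x : Fin n → ℝ → ℝ, (∀ i, Continuous (x i)) ∧
      IsRootParamOn n a Set.univ x := by
  choose r hr_mono hr_roots using
    fun t => (curvePoly n a t).roots.exists_monotone_univ_map_eq (hreal t)
  have hesymm (t : ℝ) : esymmTuple ℝ n (r t) = fun k : Fin n => a (k + 1) t := by
    ext k
    rw [esymmTuple, hr_roots, esymm_roots_curvePoly (hreal t) (mem_Icc.mpr ⟨by omega, k.isLt⟩)]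
  have hr : Continuous fun t => (⟨r t, hr_mono t⟩ : {x : Fin n → ℝ | Monotone x}) := by
    rw [(isClosedEmbedding_domRestrict_monotone_esymmTuple n).isInducing.continuous_iff]
    simp only [Function.comp_def, Set.domRestrict_apply, hesymm]
    exact continuous_pi fun k => hcont _ (mem_Icc.mpr ⟨by omega, k.isLt⟩)
  exact ⟨fun i t => r t i, fun i => (continuous_apply i).comp (continuous_subtype_val.comp hr),
    fun t _ => (hr_roots t).symm⟩

theorem continuous_root_parametrization
    (n : ℕ) (hn : 1 ≤ n) (a : ℕ → ℝ → ℝ)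
    (hcont : ∀ k ∈ Finset.Icc 1 n, Continuous (a k))
    (hreal : ∀ t : ℝ, ((curvePoly n a t).roots).card = n) :
    ∃ x : Fin n → ℝ → ℝ, (∀ i, Continuous (x i)) ∧
      IsRootParamOn n a Set.univ x :=
  continuous_root_parametrization_general n a hcont hreal
end

section
/- Let n ≥ 1 and let a₁,…,aₙ : ℝ → ℝ be continuous functions such that for every t ∈ ℝ the monic polynomial P(t)(x) = xⁿ - a₁(t)xⁿ⁻¹ + ⋯ + (-1)ⁿaₙ(t) has all roots real. For each t let x₁(t) ≤ x₂(t) ≤ ⋯ ≤ xₙ(t) denote the roots of P(t) listed in increasing order with multiplicity. Then each function xᵢ : ℝ → ℝ is continuous. -/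
/-!
The vector of ordered roots is locally bounded, by Cauchy's bound, which depends continuously on
the coefficients. Its graph is closed, being cut out by the closed conditions "`y` is monotone"
and "`∏ᵢ (z - yᵢ) = P(t)(z)` for every `z`": a monotone vector is determined by the multiset of its
entries, and that multiset by the polynomial `∏ᵢ (X - yᵢ)`. A locally bounded map into a finite
dimensional space with closed graph is continuous.
-/

open Polynomial

open Filter Topology Finset

theorem MapClusterPt.prodMk {X Y α : Type*} [TopologicalSpace X] [TopologicalSpace Y]
    {l : Filter α} {f : α → X} {g : α → Y} {a : X} {y : Y}
    (hf : Tendsto f l (𝓝 a)) (hg : MapClusterPt y l g) :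
    MapClusterPt (a, y) l fun x => (f x, g x) := by
  rw [((𝓝 a).basis_sets.prod_nhds (𝓝 y).basis_sets).mapClusterPt_iff_frequently]
  rintro ⟨s, t⟩ ⟨hs, ht⟩
  exact ((mapClusterPt_iff_frequently.1 hg t ht).and_eventually (hf hs)).mono
    fun x hx => ⟨hx.2, hx.1⟩

theorem continuousAt_of_isClosed_graph {X Y : Type*} [TopologicalSpace X] [TopologicalSpace Y]
    {f : X → Y} {x₀ : X} {K : Set Y} (hK : IsCompact K) (hfK : ∀ᶠ x in 𝓝 x₀, f x ∈ K)
    (hf : IsClosed {q : X × Y | q.2 = f q.1}) : ContinuousAt f x₀ :=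
  hK.tendsto_nhds_of_unique_mapClusterPt hfK fun _ _ hy =>
    (hf.mem_of_mapClusterPt (hy.prodMk tendsto_id) (.of_forall fun _ => rfl) :)

theorem Monotone.eq_of_multiset_map_univ_eq {α : Type*} [LinearOrder α] {n : ℕ}
    {f g : Fin n → α} (hf : Monotone f) (hg : Monotone g)
    (h : univ.val.map f = univ.val.map g) : f = g := by
  rw [Fin.univ_val_map, Fin.univ_val_map, Multiset.coe_eq_coe] at h
  exact List.ofFn_injective (h.eq_of_sortedLE hf.sortedLE_ofFn hg.sortedLE_ofFn)

namespace Polynomial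

theorem multiset_map_univ_eq_of_forall_prod_sub_eq {R ι : Type*} [CommRing R] [IsDomain R]
    [Infinite R] [Fintype ι] {f g : ι → R} (h : ∀ z, ∏ i, (z - f i) = ∏ i, (z - g i)) :
    univ.val.map f = univ.val.map g := by
  have hprod : ∏ i, (X - C (f i)) = ∏ i, (X - C (g i)) :=
    Polynomial.funext fun z => by simpa [eval_prod] using h z
  have hroots (f : ι → R) : (∏ i, (X - C (f i))).roots = univ.val.map f := by
    simpa [Multiset.map_map, Function.comp_def] using roots_multiset_prod_X_sub_C (univ.val.map f)
  rw [← hroots, ← hroots, hprod]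

theorem Monic.eq_prod_X_sub_C_of_roots_eq {R : Type*} [CommRing R] [IsDomain R] {n : ℕ}
    {p : R[X]} (hp : p.Monic) (hdeg : p.natDegree = n) {f : Fin n → R}
    (hroots : p.roots = univ.val.map f) : p = ∏ i, (X - C (f i)) := by
  have hcard : Multiset.card p.roots = p.natDegree := by simp [hroots, hdeg]
  rw [← prod_multiset_X_sub_C_of_monic_of_roots_card_eq hp hcard, hroots, Multiset.map_map]
  rfl

theorem IsRoot.norm_lt_one_add_sum_norm_coeff {K : Type*} [NormedField K] {p : K[X]}
    (hp : p.Monic) {z : K} (hz : p.IsRoot z) :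
    ‖z‖ < 1 + ∑ j ∈ range p.natDegree, ‖p.coeff j‖ := by
  have hbound : cauchyBound p ≤ 1 + ∑ j ∈ range p.natDegree, ‖p.coeff j‖₊ := by
    rw [cauchyBound, hp.leadingCoeff, nnnorm_one, div_one, add_comm]
    gcongr
    exact Finset.sup_le fun j hj =>
      single_le_sum (f := fun i => ‖p.coeff i‖₊) (fun i _ => zero_le) hj
  simpa using NNReal.coe_lt_coe.2 ((hz.norm_lt_cauchyBound hp.ne_zero).trans_le hbound)

theorem Monic.norm_le_of_roots_eq {n : ℕ} {p : ℝ[X]} (hp : p.Monic)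
    (hdeg : p.natDegree = n) {y : Fin n → ℝ} (hroots : p.roots = univ.val.map y) :
    ‖y‖ ≤ 1 + ∑ j ∈ range n, ‖p.coeff j‖ := by
  refine (pi_norm_le_iff_of_nonneg (by positivity)).2 fun i => ?_
  have hi : p.IsRoot (y i) := (mem_roots hp.ne_zero).1 <| by
    rw [hroots]
    exact Multiset.mem_map_of_mem _ (mem_univ i)
  simpa [hdeg] using (hi.norm_lt_one_add_sum_norm_coeff hp).le

theorem continuous_eval_of_continuous_coeff {X R : Type*} [TopologicalSpace X] [Semiring R]
    [TopologicalSpace R] [IsTopologicalSemiring R] {p : X → R[X]} {n : ℕ}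
    (hdeg : ∀ t, (p t).natDegree < n) (hcoeff : ∀ j, Continuous fun t => (p t).coeff j) (z : R) :
    Continuous fun t => (p t).eval z := by
  simp_rw [fun t => eval_eq_sum_range' (hdeg t) z]
  fun_prop

end Polynomial

theorem isClosed_graph_of_roots_eq_of_monotone {X : Type*} [TopologicalSpace X] {n : ℕ}
    {p : X → ℝ[X]} (hcoeff : ∀ j, Continuous fun t => (p t).coeff j)
    (hmonic : ∀ t, (p t).Monic) (hdeg : ∀ t, (p t).natDegree = n) {x : X → Fin n → ℝ}
    (hroots : ∀ t, (p t).roots = univ.val.map (x t)) (hmono : ∀ t, Monotone (x t)) :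
    IsClosed {q : X × (Fin n → ℝ) | q.2 = x q.1} := by
  have hprod (t : X) (z : ℝ) : (p t).eval z = ∏ i, (z - x t i) := by
    rw [(hmonic t).eq_prod_X_sub_C_of_roots_eq (hdeg t) (hroots t)]
    simp [eval_prod]
  have hgraph : {q : X × (Fin n → ℝ) | q.2 = x q.1} =
      {q | Monotone q.2} ∩ ⋂ z, {q | (p q.1).eval z = ∏ i, (z - q.2 i)} := by
    ext ⟨t, y⟩
    simp only [Set.mem_ofPred_eq, Set.mem_inter_iff, Set.mem_iInter, hprod]
    constructor
    · rintro rfl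
      exact ⟨hmono t, fun _ => rfl⟩
    · rintro ⟨hy, h⟩
      exact hy.eq_of_multiset_map_univ_eq (hmono t)
        (multiset_map_univ_eq_of_forall_prod_sub_eq fun z => (h z).symm)
  rw [hgraph]
  refine (isClosed_monotone.preimage continuous_snd).inter
    (isClosed_iInter fun z => isClosed_eq ?_ (by fun_prop))
  exact (continuous_eval_of_continuous_coeff (fun t => (hdeg t).trans_lt n.lt_succ_self)
    hcoeff z).comp continuous_fst

theorem continuous_of_roots_eq_of_monotone {X : Type*} [TopologicalSpace X] {n : ℕ}
    {p : X → ℝ[X]} (hcoeff : ∀ j, Continuous fun t => (p t).coeff j)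
    (hmonic : ∀ t, (p t).Monic) (hdeg : ∀ t, (p t).natDegree = n) {x : X → Fin n → ℝ}
    (hroots : ∀ t, (p t).roots = univ.val.map (x t)) (hmono : ∀ t, Monotone (x t)) :
    Continuous x := by
  set B : X → ℝ := fun t => 1 + ∑ j ∈ range n, ‖(p t).coeff j‖
  have hB : Continuous B := by fun_prop
  refine continuous_iff_continuousAt.2 fun t₀ => continuousAt_of_isClosed_graph
    (isCompact_closedBall 0 (B t₀ + 1)) ?_
    (isClosed_graph_of_roots_eq_of_monotone hcoeff hmonic hdeg hroots hmono)
  filter_upwards [hB.continuousAt.eventually (gt_mem_nhds (lt_add_one (B t₀)))] with t ht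
  exact mem_closedBall_zero_iff.2
    (((hmonic t).norm_le_of_roots_eq (hdeg t) (hroots t)).trans ht.le)

theorem curvePoly_degree_sum_lt (n : ℕ) (a : ℕ → ℝ → ℝ) (t : ℝ) :
    (∑ k ∈ Icc 1 n, C ((-1 : ℝ) ^ k * a k t) * X ^ (n - k)).degree < (n : WithBot ℕ) := by
  refine (degree_sum_le _ _).trans_lt ((Finset.sup_lt_iff (WithBot.bot_lt_coe n)).2 fun k hk => ?_)
  obtain ⟨hk1, hkn⟩ := mem_Icc.1 hk
  exact (degree_C_mul_X_pow_le _ _).trans_lt (WithBot.coe_lt_coe.2 (Nat.sub_lt (hk1.trans hkn) hk1))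

theorem curvePoly_monic (n : ℕ) (a : ℕ → ℝ → ℝ) (t : ℝ) : (curvePoly n a t).Monic :=
  monic_X_pow_add (curvePoly_degree_sum_lt n a t)

theorem curvePoly_natDegree (n : ℕ) (a : ℕ → ℝ → ℝ) (t : ℝ) : (curvePoly n a t).natDegree = n := by
  rw [curvePoly, natDegree_add_eq_left_of_degree_lt, natDegree_X_pow]
  simpa using curvePoly_degree_sum_lt n a t

theorem continuous_curvePoly_coeff {n : ℕ} {a : ℕ → ℝ → ℝ}
    (hcont : ∀ k ∈ Icc 1 n, Continuous (a k)) (j : ℕ) :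
    Continuous fun t => (curvePoly n a t).coeff j := by
  simp only [curvePoly, coeff_add, finsetSum_coeff, coeff_C_mul_X_pow]
  refine continuous_const.add (continuous_finsetSum _ fun k hk => ?_)
  split_ifs
  · exact continuous_const.mul (hcont k hk)
  · exact continuous_const

theorem ordered_roots_continuous_general
    (n : ℕ) (a : ℕ → ℝ → ℝ)
    (hcont : ∀ k ∈ Finset.Icc 1 n, Continuous (a k))
    (x : Fin n → ℝ → ℝ)
    (hx : IsRootParamOn n a Set.univ x)
    (hmono : ∀ t : ℝ, ∀ i j : Fin n, i ≤ j → x i t ≤ x j t) :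
    ∀ i, Continuous (x i) := by
  have hvec : Continuous fun t i => x i t :=
    continuous_of_roots_eq_of_monotone (continuous_curvePoly_coeff hcont) (curvePoly_monic n a)
      (curvePoly_natDegree n a) (fun t => hx t trivial) fun t i j => hmono t i j
  exact fun i => (continuous_apply i).comp hvec

theorem ordered_roots_continuous
    (n : ℕ) (hn : 1 ≤ n) (a : ℕ → ℝ → ℝ)
    (hcont : ∀ k ∈ Finset.Icc 1 n, Continuous (a k))
    (hreal : ∀ t : ℝ, ((curvePoly n a t).roots).card = n)
    (x : Fin n → ℝ → ℝ)
    (hx : IsRootParamOn n a Set.univ x)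
    (hmono : ∀ t : ℝ, ∀ i j : Fin n, i ≤ j → x i t ≤ x j t) :
    ∀ i, Continuous (x i) :=
  ordered_roots_continuous_general n a hcont x hx hmono
end

section
/- Let n ≥ 2 and let a₂,…,aₙ, a_{2,2},…,a_{n,n} : ℝ → ℝ be functions with each a_{k,k} continuous and a_k(t) = t^k·a_{k,k}(t) for all t ∈ ℝ and 2 ≤ k ≤ n. Let P(t)(x) = xⁿ + a₂(t)xⁿ⁻² - a₃(t)xⁿ⁻³ + ⋯ + (-1)ⁿaₙ(t). Suppose y : ℝ → ℝ satisfies P(t)(y(t)) = 0 for all t, y(0) = 0, and y is differentiable at 0. Then y'(0) is a root of the polynomial P¹(0)(z) = zⁿ + a_{2,2}(0)zⁿ⁻² - a_{3,3}(0)zⁿ⁻³ + ⋯ + (-1)ⁿa_{n,n}(0). -/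
open Polynomial

/-!
Since `a_k(t) = t^k a_{k,k}(t)`, substituting `x = t z` gives `P(t)(t z) = tⁿ P¹(t)(z)`, so
`y(t)/t` is a root of `P¹(t)` for `t ≠ 0`. As `t → 0` the difference quotient `y(t)/t` tends to
`y'(0)`, and the coefficients of `P¹(t)` are continuous, so `P¹(0)(y'(0)) = 0`.
-/

open Filter Topology

theorem Finset.forall_mem_Icc_of_succ {p : ℕ → Prop} {m n : ℕ} (hm : p m)
    (h : ∀ k ∈ Finset.Icc (m + 1) n, p k) : ∀ k ∈ Finset.Icc m n, p k := by
  intro k hk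
  obtain ⟨hmk, hkn⟩ := Finset.mem_Icc.mp hk
  rcases hmk.eq_or_lt with rfl | hlt
  · exact hm
  · exact h k (Finset.mem_Icc.mpr ⟨hlt, hkn⟩)

theorem HasDerivAt.tendsto_div_self {𝕜 : Type*} [NontriviallyNormedField 𝕜] {f : 𝕜 → 𝕜}
    {f' : 𝕜} (hf : HasDerivAt f f' 0) (hf0 : f 0 = 0) :
    Tendsto (fun t => f t / t) (𝓝[≠] 0) (𝓝 f') := by
  simpa [hf0, div_eq_inv_mul] using hasDerivAt_iff_tendsto_slope_zero.mp hf

theorem continuous_curvePoly_eval {n : ℕ} {b : ℕ → ℝ → ℝ}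
    (hb : ∀ k ∈ Finset.Icc 1 n, Continuous (b k)) :
    Continuous fun p : ℝ × ℝ => (curvePoly n b p.1).eval p.2 := by
  simp only [curvePoly, eval_add, eval_pow, eval_X, eval_finsetSum, eval_mul, eval_C]
  fun_prop (disch := assumption)

theorem curvePoly_eval_mul {n : ℕ} {a b : ℕ → ℝ → ℝ}
    (hab : ∀ k ∈ Finset.Icc 1 n, ∀ t, a k t = t ^ k * b k t) (t z : ℝ) :
    (curvePoly n a t).eval (t * z) = t ^ n * (curvePoly n b t).eval z := by
  simp only [curvePoly, eval_add, eval_pow, eval_X, eval_finsetSum, eval_mul, eval_C, mul_add,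
    Finset.mul_sum]
  congr 1
  · ring
  · refine Finset.sum_congr rfl fun k hk => ?_
    have hsplit : t ^ n = t ^ k * t ^ (n - k) := by
      rw [← pow_add, Nat.add_sub_cancel' (Finset.mem_Icc.mp hk).2]
    rw [hab k hk, hsplit]
    ring

theorem eval_curvePoly_div_eq_zero {n : ℕ} {a b : ℕ → ℝ → ℝ}
    (hab : ∀ k ∈ Finset.Icc 1 n, ∀ t, a k t = t ^ k * b k t) {t x : ℝ} (ht : t ≠ 0)
    (hx : (curvePoly n a t).eval x = 0) : (curvePoly n b t).eval (x / t) = 0 := by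
  have h := curvePoly_eval_mul hab t (x / t)
  rw [mul_div_cancel₀ x ht, hx] at h
  exact (mul_eq_zero.mp h.symm).resolve_left (pow_ne_zero n ht)

theorem deriv_of_root_is_root_of_reduced_general
    (n : ℕ) (a b : ℕ → ℝ → ℝ)
    (ha1 : ∀ t : ℝ, a 1 t = 0) (hb1 : ∀ t : ℝ, b 1 t = 0)
    (hbcont : ∀ k ∈ Finset.Icc 2 n, Continuous (b k))
    (hab : ∀ k ∈ Finset.Icc 2 n, ∀ t : ℝ, a k t = t ^ k * b k t)
    (y : ℝ → ℝ)
    (hy : ∀ t : ℝ, (curvePoly n a t).eval (y t) = 0)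
    (hy0 : y 0 = 0)
    (hydiff : DifferentiableAt ℝ y 0) :
    (curvePoly n b 0).eval (deriv y 0) = 0 := by
  have hab' : ∀ k ∈ Finset.Icc 1 n, ∀ t, a k t = t ^ k * b k t :=
    Finset.forall_mem_Icc_of_succ (fun t => by simp [ha1, hb1]) hab
  have hbcont' : ∀ k ∈ Finset.Icc 1 n, Continuous (b k) :=
    Finset.forall_mem_Icc_of_succ (by simpa [funext hb1] using continuous_const) hbcont
  have hlim : Tendsto (fun t => (curvePoly n b t).eval (y t / t)) (𝓝[≠] 0)
      (𝓝 ((curvePoly n b 0).eval (deriv y 0))) :=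
    ((continuous_curvePoly_eval hbcont').tendsto (0, deriv y 0)).comp
      (tendsto_nhdsWithin_of_tendsto_nhds tendsto_id |>.prodMk_nhds
        (hydiff.hasDerivAt.tendsto_div_self hy0))
  have hroot : ∀ᶠ t in 𝓝[≠] 0, (curvePoly n b t).eval (y t / t) = 0 :=
    eventually_nhdsWithin_of_forall fun t ht => eval_curvePoly_div_eq_zero hab' ht (hy t)
  exact tendsto_nhds_unique hlim (tendsto_const_nhds.congr' (hroot.mono fun _ h => h.symm))

theorem deriv_of_root_is_root_of_reduced
    (n : ℕ) (hn : 2 ≤ n) (a b : ℕ → ℝ → ℝ)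
    (ha1 : ∀ t : ℝ, a 1 t = 0) (hb1 : ∀ t : ℝ, b 1 t = 0)
    (hbcont : ∀ k ∈ Finset.Icc 2 n, Continuous (b k))
    (hab : ∀ k ∈ Finset.Icc 2 n, ∀ t : ℝ, a k t = t ^ k * b k t)
    (y : ℝ → ℝ)
    (hy : ∀ t : ℝ, (curvePoly n a t).eval (y t) = 0)
    (hy0 : y 0 = 0)
    (hydiff : DifferentiableAt ℝ y 0) :
    (curvePoly n b 0).eval (deriv y 0) = 0 :=
  deriv_of_root_is_root_of_reduced_general n a b ha1 hb1 hbcont hab y hy hy0 hydiff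
end

section
/- Let a < b be real numbers and let f : (a, b) → ℝ be a bounded function having the intermediate value property (for any s < t in (a, b) and any c strictly between f(s) and f(t) there is u between s and t with f(u) = c). If the set of cluster values of f at a from the right — i.e. the set of limits of convergent sequences f(tₘ) with tₘ → a⁺ — is finite, then lim_{t→a⁺} f(t) exists. -/
open Filter Topology

theorem tendsto_of_ivp_of_finite_clusters
    (a b : ℝ) (hab : a < b) (f : ℝ → ℝ)
    (hbd : ∃ M : ℝ, ∀ t ∈ Set.Ioo a b, |f t| ≤ M)
    (hivp : ∀ s ∈ Set.Ioo a b, ∀ t ∈ Set.Ioo a b, s < t →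
      ∀ c : ℝ, (f s < c ∧ c < f t) ∨ (f t < c ∧ c < f s) →
        ∃ u ∈ Set.Icc s t, f u = c)
    (hfin : {c : ℝ | ∃ u : ℕ → ℝ, (∀ m, u m ∈ Set.Ioo a b) ∧
      Tendsto u atTop (𝓝 a) ∧ Tendsto (fun m => f (u m)) atTop (𝓝 c)}.Finite) :
    ∃ L : ℝ, Tendsto f (𝓝[Set.Ioo a b] a) (𝓝 L) := by
  obtain ⟨M, hM⟩ := hbd
  set S := {c : ℝ | ∃ u : ℕ → ℝ, (∀ m, u m ∈ Set.Ioo a b) ∧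
      Tendsto u atTop (𝓝 a) ∧ Tendsto (fun m => f (u m)) atTop (𝓝 c)} with hSdef
  -- extraction of cluster values from any sequence tending to a
  have hmem : ∀ u : ℕ → ℝ, (∀ m, u m ∈ Set.Ioo a b) → Tendsto u atTop (𝓝 a) →
      ∃ c ∈ S, ∃ φ : ℕ → ℕ, StrictMono φ ∧
        Tendsto (fun m => f (u (φ m))) atTop (𝓝 c) := by
    intro u hu hua
    have hmemIcc : ∀ m, f (u m) ∈ Set.Icc (-M) M := fun m => abs_le.mp (hM _ (hu m))
    obtain ⟨c, _, φ, hφ, hlim⟩ := (isCompact_Icc).tendsto_subseq hmemIcc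
    refine ⟨c, ⟨fun m => u (φ m), fun m => hu _, hua.comp hφ.tendsto_atTop, hlim⟩, φ, hφ, hlim⟩
  -- S is nonempty
  have hu0 : ∀ m : ℕ, a + (b - a) / (m + 2) ∈ Set.Ioo a b := by
    intro m
    constructor
    · have : (0:ℝ) < (b - a) / (m + 2) := div_pos (by linarith) (by positivity)
      linarith
    · have h1 : (b - a) / ((m:ℝ) + 2) < (b - a) / 1 := by
        apply div_lt_div_of_pos_left (by linarith) one_pos
        linarith [Nat.cast_nonneg (α := ℝ) m]
      simp at h1
      linarith
  have hu0a : Tendsto (fun m : ℕ => a + (b - a) / (m + 2)) atTop (𝓝 a) := by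
    have h2 : Tendsto (fun m : ℕ => (m:ℝ) + 2) atTop atTop :=
      tendsto_atTop_add_const_right _ 2 tendsto_natCast_atTop_atTop
    have := (tendsto_const_nhds (x := b - a) (f := atTop (α := ℕ))).div_atTop h2
    simpa using (tendsto_const_nhds (x := a) (f := atTop (α := ℕ))).add this
  obtain ⟨L, hLS, -⟩ := hmem _ hu0 hu0a
  -- S is a subsingleton
  have hK : ∀ c₁ ∈ S, ∀ c₂ ∈ S, c₁ < c₂ → False := by
    rintro c₁ ⟨u, hu, hua, huf⟩ c₂ ⟨v, hv, hva, hvf⟩ hlt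
    have hsub : Set.Ioo c₁ c₂ ⊆ S := by
      rintro c ⟨hc1, hc2⟩
      have h1 := huf.eventually_lt_const hc1
      have h2 := hvf.eventually_const_lt hc2
      obtain ⟨N, hN⟩ := eventually_atTop.mp (h1.and h2)
      have hex : ∀ m : ℕ, ∃ w, w ∈ Set.Ioo a b ∧
          w ≤ max (u (m + N)) (v (m + N)) ∧ f w = c := by
        intro m
        have h := hN (m + N) (Nat.le_add_left _ _)
        rcases lt_trichotomy (u (m + N)) (v (m + N)) with h' | h' | h'
        · obtain ⟨w, hw, hfw⟩ := hivp _ (hu _) _ (hv _) h' c (Or.inl ⟨h.1, h.2⟩)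
          exact ⟨w, ⟨lt_of_lt_of_le (hu _).1 hw.1, lt_of_le_of_lt hw.2 (hv _).2⟩,
            hw.2.trans (le_max_right _ _), hfw⟩
        · exact absurd (h.1.trans h.2) (by rw [h']; exact lt_irrefl _)
        · obtain ⟨w, hw, hfw⟩ := hivp _ (hv _) _ (hu _) h' c (Or.inr ⟨h.1, h.2⟩)
          exact ⟨w, ⟨lt_of_lt_of_le (hv _).1 hw.1, lt_of_le_of_lt hw.2 (hu _).2⟩,
            hw.2.trans (le_max_left _ _), hfw⟩
      choose w hw hwle hwf using hex
      have hmax : Tendsto (fun m => max (u (m + N)) (v (m + N))) atTop (𝓝 a) := by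
        have := (hua.comp (tendsto_add_atTop_nat N)).max
          (hva.comp (tendsto_add_atTop_nat N))
        simpa using this
      have hwa : Tendsto w atTop (𝓝 a) :=
        tendsto_of_tendsto_of_tendsto_of_le_of_le tendsto_const_nhds hmax
          (fun m => (hw m).1.le) hwle
      exact ⟨w, hw, hwa, by simp only [hwf]; exact tendsto_const_nhds⟩
    exact (Set.Ioo_infinite hlt) (hfin.subset hsub)
  have hsing : ∀ c ∈ S, c = L := by
    intro c hc
    rcases lt_trichotomy c L with h | h | h
    · exact absurd (hK c hc L hLS h) not_false
    · exact h
    · exact absurd (hK L hLS c hc h) not_false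
  refine ⟨L, ?_⟩
  rw [Metric.tendsto_nhdsWithin_nhds]
  by_contra hcon
  push_neg at hcon
  obtain ⟨ε, hε, hδ⟩ := hcon
  have hex : ∀ m : ℕ, ∃ x, x ∈ Set.Ioo a b ∧ dist x a < 1 / (m + 1) ∧
      ε ≤ dist (f x) L := by
    intro m
    obtain ⟨x, hx1, hx2, hx3⟩ := hδ (1 / (m + 1)) (by positivity)
    exact ⟨x, hx1, hx2, hx3⟩
  choose t ht htd htf using hex
  have hta : Tendsto t atTop (𝓝 a) := by
    rw [tendsto_iff_dist_tendsto_zero]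
    exact squeeze_zero (fun m => dist_nonneg) (fun m => (htd m).le)
      tendsto_one_div_add_atTop_nhds_zero_nat
  obtain ⟨c, hcS, φ, hφ, hlim⟩ := hmem t ht hta
  have hcL : c = L := hsing c hcS
  have hd : Tendsto (fun m => dist (f (t (φ m))) L) atTop (𝓝 (dist c L)) :=
    hlim.dist tendsto_const_nhds
  have hle : ε ≤ dist c L :=
    le_of_tendsto_of_tendsto tendsto_const_nhds hd
      (Eventually.of_forall fun m => htf _)
  rw [hcL, dist_self] at hle
  linarith
end

section
/- Let n ≥ 1 and let a₁,…,aₙ : ℝ → ℝ be functions of class C^{2n} such that for every t ∈ ℝ the monic polynomial P(t)(x) = xⁿ - a₁(t)xⁿ⁻¹ + ⋯ + (-1)ⁿaₙ(t) has all roots real. Fix t₀ ∈ ℝ, and suppose x : ℝ → ℝⁿ is a parametrization of the roots of P, differentiable on a neighborhood of t₀, whose derivative x' is continuous at t₀ and which has the property that for every differentiable root y (i.e. y differentiable with P(t)(y(t)) = 0 near t₀ and y(t₀) = x_j(t₀) for some j), the value y'(t₀) belongs to {x_i'(t₀) : x_i(t₀) = y(t₀)}. Then every parametrization y = (y₁,…,yₙ)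 : ℝ → ℝⁿ of the roots of P which is differentiable near t₀ has derivative y' continuous at t₀. -/
/-!
Two root parametrizations take the same values, so each `yᵢ(t)` equals some `xⱼ(t)`. Where both
are differentiable, pigeonhole gives one `j` with `yᵢ = xⱼ` at points accumulating at `t`, and the
difference quotients along them give `yᵢ'(t) = xⱼ'(t)`. Hence near `t₀` every value `yᵢ'(t)` is
some `xⱼ'(t)` with `yᵢ(t) = xⱼ(t)`; any `j` used at points `t ≠ t₀` arbitrarily close to `t₀` also
has `yᵢ'(t₀) = xⱼ'(t₀)`, so continuity of the `xⱼ'` at `t₀` passes to `yᵢ'`.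
-/

open Polynomial

open Filter Topology

section Deriv

variable {𝕜 : Type*} [NontriviallyNormedField 𝕜] {F : Type*} [NormedAddCommGroup F]
  [NormedSpace 𝕜 F]

theorem eq_and_deriv_eq_of_frequently_eq {f g : 𝕜 → F} {t : 𝕜} (hf : DifferentiableAt 𝕜 f t)
    (hg : DifferentiableAt 𝕜 g t) (hfg : ∃ᶠ u in 𝓝[≠] t, f u = g u) :
    f t = g t ∧ deriv f t = deriv g t := by
  have hval : f t = g t :=
    tendsto_nhds_unique_of_frequently_eq (hf.continuousAt.tendsto.mono_left nhdsWithin_le_nhds)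
      (hg.continuousAt.tendsto.mono_left nhdsWithin_le_nhds) hfg
  refine ⟨hval, tendsto_nhds_unique_of_frequently_eq hf.hasDerivAt.tendsto_slope
    hg.hasDerivAt.tendsto_slope (hfg.mono fun u hu => ?_)⟩
  rw [slope_def_module, slope_def_module, hu, hval]

variable {ι : Type*} [Finite ι]

theorem exists_eq_and_deriv_eq_of_eventually_exists_eq {f : 𝕜 → F} {g : ι → 𝕜 → F} {t : 𝕜}
    (hf : DifferentiableAt 𝕜 f t) (hg : ∀ j, DifferentiableAt 𝕜 (g j) t)
    (hfg : ∀ᶠ u in 𝓝 t, ∃ j, f u = g j u) :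
    ∃ j, f t = g j t ∧ deriv f t = deriv (g j) t := by
  obtain ⟨j, hj⟩ :=
    frequently_exists.1 (hfg.filter_mono (nhdsWithin_le_nhds (s := {t}ᶜ))).frequently
  exact ⟨j, eq_and_deriv_eq_of_frequently_eq hf (hg j) hj⟩

theorem continuousAt_deriv_of_eventually_exists_eq_and_deriv_eq {f : 𝕜 → F} {g : ι → 𝕜 → F}
    {t₀ : 𝕜} (hf : DifferentiableAt 𝕜 f t₀) (hg : ∀ j, DifferentiableAt 𝕜 (g j) t₀)
    (hg' : ∀ j, ContinuousAt (deriv (g j)) t₀)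
    (hfg : ∀ᶠ t in 𝓝 t₀, ∃ j, f t = g j t ∧ deriv f t = deriv (g j) t) :
    ContinuousAt (deriv f) t₀ := by
  intro V hV
  have hV_of_match : ∀ j, ∀ᶠ t in 𝓝 t₀,
      f t = g j t → deriv f t = deriv (g j) t → deriv f t ∈ V := by
    intro j
    by_cases hj : deriv f t₀ = deriv (g j) t₀
    · filter_upwards [hg' j (hj ▸ hV)] with t ht _ hderiv
      rwa [hderiv]
    · have hne : ∀ᶠ u in 𝓝[≠] t₀, f u ≠ g j u :=
        not_frequently.1 fun h => hj (eq_and_deriv_eq_of_frequently_eq hf (hg j) h).2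
      filter_upwards [eventually_nhdsWithin_iff.1 hne] with t hne_t heq _
      obtain rfl : t = t₀ := by_contra fun h => hne_t h heq
      exact mem_of_mem_nhds hV
  change ∀ᶠ t in 𝓝 t₀, deriv f t ∈ V
  filter_upwards [hfg, eventually_all.2 hV_of_match] with t ⟨j, heq, hderiv⟩ hmatch
  exact hmatch j heq hderiv

end Deriv

theorem IsRootParamOn.exists_eq {n : ℕ} {a : ℕ → ℝ → ℝ} {T : Set ℝ} {x y : Fin n → ℝ → ℝ}
    (hx : IsRootParamOn n a T x) (hy : IsRootParamOn n a T y) (i : Fin n) {t : ℝ} (ht : t ∈ T) :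
    ∃ j, y i t = x j t := by
  have hroot : y i t ∈ Multiset.map (fun j => x j t) Finset.univ.val := by
    rw [← hx t ht, hy t ht]
    exact Multiset.mem_map_of_mem _ (Finset.mem_univ i)
  obtain ⟨j, -, hj⟩ := Multiset.mem_map.1 hroot
  exact ⟨j, hj.symm⟩

theorem deriv_continuousAt_of_any_differentiable_parametrization_general
    (n : ℕ) (a : ℕ → ℝ → ℝ)
    (t₀ : ℝ) (x : Fin n → ℝ → ℝ)
    (hx : IsRootParamOn n a Set.univ x)
    (hxdiff : ∃ V : Set ℝ, IsOpen V ∧ t₀ ∈ V ∧ ∀ i, ∀ t ∈ V, DifferentiableAt ℝ (x i) t)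
    (hxC1 : ∀ i, ContinuousAt (deriv (x i)) t₀) :
    ∀ y : Fin n → ℝ → ℝ, IsRootParamOn n a Set.univ y →
      (∃ W : Set ℝ, IsOpen W ∧ t₀ ∈ W ∧ ∀ i, ∀ t ∈ W, DifferentiableAt ℝ (y i) t) →
      ∀ i, ContinuousAt (deriv (y i)) t₀ := by
  rintro y hy ⟨W, hWo, hWt₀, hyW⟩ i
  obtain ⟨V, hVo, hVt₀, hxV⟩ := hxdiff
  refine continuousAt_deriv_of_eventually_exists_eq_and_deriv_eq (hyW i t₀ hWt₀)
    (fun j => hxV j t₀ hVt₀) hxC1 ?_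
  filter_upwards [hVo.mem_nhds hVt₀, hWo.mem_nhds hWt₀] with t htV htW
  exact exists_eq_and_deriv_eq_of_eventually_exists_eq (hyW i t htW) (fun j => hxV j t htV)
    (.of_forall fun u => hx.exists_eq hy i (Set.mem_univ u))

theorem deriv_continuousAt_of_any_differentiable_parametrization
    (n : ℕ) (hn : 1 ≤ n) (a : ℕ → ℝ → ℝ)
    (hsmooth : ∀ k ∈ Finset.Icc 1 n, ContDiff ℝ (2 * n : ℕ) (a k))
    (hreal : ∀ t : ℝ, ((curvePoly n a t).roots).card = n)
    (t₀ : ℝ) (x : Fin n → ℝ → ℝ)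
    (hx : IsRootParamOn n a Set.univ x)
    (hxdiff : ∃ V : Set ℝ, IsOpen V ∧ t₀ ∈ V ∧ ∀ i, ∀ t ∈ V, DifferentiableAt ℝ (x i) t)
    (hxC1 : ∀ i, ContinuousAt (deriv (x i)) t₀)
    (hxuniv : ∀ y : ℝ → ℝ,
      (∀ᶠ t in nhds t₀, DifferentiableAt ℝ y t) →
      (∀ᶠ t in nhds t₀, (curvePoly n a t).eval (y t) = 0) →
      (∃ j, y t₀ = x j t₀) →
      ∃ i, x i t₀ = y t₀ ∧ deriv y t₀ = deriv (x i) t₀) :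
    ∀ y : Fin n → ℝ → ℝ, IsRootParamOn n a Set.univ y →
      (∃ W : Set ℝ, IsOpen W ∧ t₀ ∈ W ∧ ∀ i, ∀ t ∈ W, DifferentiableAt ℝ (y i) t) →
      ∀ i, ContinuousAt (deriv (y i)) t₀ :=
  deriv_continuousAt_of_any_differentiable_parametrization_general n a t₀ x hx hxdiff hxC1
end
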